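/- Let S : [0,T] → L(H) be strongly continuous with sup_{t∈[0,T]} ‖S(t)‖ ≤ C, and let Q_ξ be a trace class operator on H. Then the map t ↦ S(t) Q_ξ S(t)* from [0,T] to the trace class L₁(H) is continuous with respect to the trace-class norm. -/
import Mathlib


open RealInnerProductSpace

/-- An operator `Γ : H → U` is trace class if it admits a representation
`Γ x = Σ_j ⟨e_j, x⟩ f_j` with `Σ_j ‖e_j‖ ‖f_j‖ < ∞`. -/
def IsTraceClass {H U : Type*} [NormedAddCommGroup H] [InnerProductSpace ℝ H]
    [NormedAddCommGroup U] [NormedSpace ℝ U] (Γ : H →L[ℝ] U) : Prop :=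
  ∃ (e : ℕ → H) (f : ℕ → U),
    (∀ x : H, HasSum (fun j => ⟪e j, x⟫ • f j) (Γ x)) ∧
      Summable (fun j => ‖e j‖ * ‖f j‖)

/-- The trace-class (nuclear) norm
`‖Γ‖_{L₁} = inf { Σ_j ‖e_j‖ ‖f_j‖ : Γ = Σ_j ⟨·, e_j⟩ f_j }`. -/
noncomputable def traceNorm {H U : Type*} [NormedAddCommGroup H] [InnerProductSpace ℝ H]
    [NormedAddCommGroup U] [NormedSpace ℝ U] (Γ : H →L[ℝ] U) : ℝ :=
  sInf { c : ℝ | ∃ (e : ℕ → H) (f : ℕ → U),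
    (∀ x : H, HasSum (fun j => ⟪e j, x⟫ • f j) (Γ x)) ∧
      HasSum (fun j => ‖e j‖ * ‖f j‖) c }

open ContinuousLinearMap

lemma traceNorm_le_of_hasSum {H U : Type*} [NormedAddCommGroup H] [InnerProductSpace ℝ H]
    [NormedAddCommGroup U] [NormedSpace ℝ U] (Γ : H →L[ℝ] U) (c : ℝ) (e : ℕ → H) (f : ℕ → U)
    (h1 : ∀ x : H, HasSum (fun j => ⟪e j, x⟫ • f j) (Γ x))
    (h2 : HasSum (fun j => ‖e j‖ * ‖f j‖) c) :
    traceNorm Γ ≤ c := by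
  apply csInf_le
  · refine ⟨0, ?_⟩
    rintro c' ⟨e', f', -, hs⟩
    exact hs.nonneg fun j => mul_nonneg (norm_nonneg _) (norm_nonneg _)
  · exact ⟨e, f, h1, h2⟩

set_option maxHeartbeats 2000000 in
/-- if `S : [0,T] → L(H)` is strongly continuous and uniformly bounded
and `Q_ξ` is trace class, then `t ↦ S(t) Q_ξ S(t)*` is continuous in trace-class norm. -/
theorem SQS_traceNorm_continuous {H : Type*}
    [NormedAddCommGroup H] [InnerProductSpace ℝ H] [CompleteSpace H]
    (T C : ℝ) (hT : 0 < T) (S : ℝ → H →L[ℝ] H)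
    (hcont : ∀ v : H, ContinuousOn (fun t => S t v) (Set.Icc 0 T))
    (hbound : ∀ t ∈ Set.Icc (0 : ℝ) T, ‖S t‖ ≤ C)
    (Qξ : H →L[ℝ] H) (hQ : IsTraceClass Qξ) :
    ∀ t ∈ Set.Icc (0 : ℝ) T, ∀ ε > (0 : ℝ), ∃ δ > (0 : ℝ),
      ∀ s ∈ Set.Icc (0 : ℝ) T, |s - t| < δ →
        traceNorm (S t ∘L Qξ ∘L adjoint (S t) - S s ∘L Qξ ∘L adjoint (S s)) < ε := by
  obtain ⟨e, f, hrep, hsum⟩ := hQ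
  intro t ht ε hε
  have hC : 0 ≤ C := le_trans (norm_nonneg _) (hbound t ht)
  have hb : ∀ u ∈ Set.Icc (0:ℝ) T, ∀ v : H, ‖S u v‖ ≤ C * ‖v‖ := fun u hu v =>
    (S u).le_of_opNorm_le (hbound u hu) v
  set M : ℕ → ℝ := fun k => 4 * C * C * (‖e k‖ * ‖f k‖) with hMdef
  have hM : Summable M := hsum.mul_left _
  have hε2 : (0:ℝ) < ε / 2 := by linarith
  -- choose N with small tail
  obtain ⟨N, hN⟩ := ((tendsto_sum_nat_add M).eventually (gt_mem_nhds hε2)).exists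
  -- the pointwise bound functions
  set g : ℕ → ℝ → ℝ := fun k s =>
    ‖S t (e k) - S s (e k)‖ * ‖S t (f k)‖ + ‖S s (e k)‖ * ‖S t (f k) - S s (f k)‖ with hgdef
  have hg0 : ∀ k, g k t = 0 := by intro k; simp [hgdef]
  -- head is continuous with value 0 at t
  have hhead : Filter.Tendsto (fun s => ∑ k ∈ Finset.range N, g k s)
      (nhdsWithin t (Set.Icc 0 T)) (nhds 0) := by
    have hc : ∀ k, ContinuousWithinAt (g k) (Set.Icc 0 T) t := by
      intro k
      have h1 : ContinuousWithinAt (fun s => S s (e k)) (Set.Icc 0 T) t := hcont (e k) t ht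
      have h2 : ContinuousWithinAt (fun s => S s (f k)) (Set.Icc 0 T) t := hcont (f k) t ht
      exact ((continuousWithinAt_const.sub h1).norm.mul continuousWithinAt_const).add
        (h1.norm.mul (continuousWithinAt_const.sub h2).norm)
    have := Filter.Tendsto.congr' (Filter.EventuallyEq.refl _ _)
      (tendsto_finset_sum (Finset.range N) (fun k _ => (hc k).tendsto))
    simpa [hg0] using this
  obtain ⟨δ, hδpos, hδ⟩ : ∃ δ > (0:ℝ), ∀ s ∈ Set.Icc (0:ℝ) T, dist s t < δ →
      ∑ k ∈ Finset.range N, g k s < ε / 2 := by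
    have h := hhead.eventually (gt_mem_nhds hε2)
    rw [Filter.Eventually, Metric.mem_nhdsWithin_iff] at h
    obtain ⟨δ, hδ, hsub⟩ := h
    exact ⟨δ, hδ, fun s hs hd => hsub ⟨Metric.mem_ball.mpr hd, hs⟩⟩
  refine ⟨δ, hδpos, ?_⟩
  intro s hs hst
  -- bounds for this s
  have hgle : ∀ k, g k s ≤ M k := by
    intro k
    have h1 : ‖S t (e k) - S s (e k)‖ ≤ 2 * C * ‖e k‖ := by
      calc ‖S t (e k) - S s (e k)‖ ≤ ‖S t (e k)‖ + ‖S s (e k)‖ := norm_sub_le _ _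
        _ ≤ C * ‖e k‖ + C * ‖e k‖ := add_le_add (hb t ht _) (hb s hs _)
        _ = 2 * C * ‖e k‖ := by ring
    have h2 : ‖S t (f k) - S s (f k)‖ ≤ 2 * C * ‖f k‖ := by
      calc ‖S t (f k) - S s (f k)‖ ≤ ‖S t (f k)‖ + ‖S s (f k)‖ := norm_sub_le _ _
        _ ≤ C * ‖f k‖ + C * ‖f k‖ := add_le_add (hb t ht _) (hb s hs _)
        _ = 2 * C * ‖f k‖ := by ring
    have h3 : ‖S t (f k)‖ ≤ C * ‖f k‖ := hb t ht _
    have h4 : ‖S s (e k)‖ ≤ C * ‖e k‖ := hb s hs _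
    calc g k s ≤ 2 * C * ‖e k‖ * (C * ‖f k‖) + C * ‖e k‖ * (2 * C * ‖f k‖) :=
          add_le_add (mul_le_mul h1 h3 (norm_nonneg _) (by positivity))
            (mul_le_mul h4 h2 (norm_nonneg _) (by positivity))
      _ = M k := by simp [hMdef]; ring
  have hp1 : Summable (fun k => ‖S t (e k) - S s (e k)‖ * ‖S t (f k)‖) := by
    apply Summable.of_nonneg_of_le (fun k => by positivity) _ hM
    intro k
    exact (le_add_of_nonneg_right (by positivity)).trans (hgle k)
  have hp2 : Summable (fun k => ‖S s (e k)‖ * ‖S t (f k) - S s (f k)‖) := by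
    apply Summable.of_nonneg_of_le (fun k => by positivity) _ hM
    intro k
    exact (le_add_of_nonneg_left (by positivity)).trans (hgle k)
  have hgs : Summable (fun k => g k s) := hp1.add hp2
  -- the representing sequences for the difference
  set E : ℕ → H := fun n => if n % 2 = 0 then S t (e (n/2)) - S s (e (n/2)) else S s (e (n/2))
    with hEdef
  set F : ℕ → H := fun n => if n % 2 = 0 then S t (f (n/2)) else S t (f (n/2)) - S s (f (n/2))
    with hFdef
  have hmod0 : ∀ k : ℕ, (2*k) % 2 = 0 ∧ (2*k)/2 = k := fun k => by omega
  have hmod1 : ∀ k : ℕ, ¬((2*k+1) % 2 = 0) ∧ (2*k+1)/2 = k := fun k => by omega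
  have hEe : ∀ k, E (2*k) = S t (e k) - S s (e k) := fun k => by
    simp only [hEdef]; rw [if_pos (hmod0 k).1, (hmod0 k).2]
  have hFe : ∀ k, F (2*k) = S t (f k) := fun k => by
    simp only [hFdef]; rw [if_pos (hmod0 k).1, (hmod0 k).2]
  have hEo : ∀ k, E (2*k+1) = S s (e k) := fun k => by
    simp only [hEdef]; rw [if_neg (hmod1 k).1, (hmod1 k).2]
  have hFo : ∀ k, F (2*k+1) = S t (f k) - S s (f k) := fun k => by
    simp only [hFdef]; rw [if_neg (hmod1 k).1, (hmod1 k).2]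
  have hAB : ∀ (u v : ℝ) (x : H),
      HasSum (fun j => ⟪S u (e j), x⟫ • S v (f j)) (S v (Qξ ((adjoint (S u)) x))) := by
    intro u v x
    have h := (S v).hasSum (hrep ((adjoint (S u)) x))
    have heq : (fun j => S v (⟪e j, (adjoint (S u)) x⟫ • f j)) =
        fun j => ⟪S u (e j), x⟫ • S v (f j) := by
      funext j
      rw [map_smul, ContinuousLinearMap.adjoint_inner_right]
    rwa [heq] at h
  have hxrep : ∀ x : H, HasSum (fun n => ⟪E n, x⟫ • F n)
      ((S t ∘L Qξ ∘L adjoint (S t) - S s ∘L Qξ ∘L adjoint (S s)) x) := by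
    intro x
    have heven : HasSum (fun k => ⟪E (2*k), x⟫ • F (2*k))
        (S t (Qξ (adjoint (S t) x)) - S t (Qξ (adjoint (S s) x))) := by
      have h := (hAB t t x).sub (hAB s t x)
      have heq : (fun k => ⟪E (2*k), x⟫ • F (2*k)) =
          fun k => ⟪S t (e k), x⟫ • S t (f k) - ⟪S s (e k), x⟫ • S t (f k) := by
        funext k; rw [hEe k, hFe k, inner_sub_left, sub_smul]
      rw [heq]; exact h
    have hodd : HasSum (fun k => ⟪E (2*k+1), x⟫ • F (2*k+1))
        (S t (Qξ (adjoint (S s) x)) - S s (Qξ (adjoint (S s) x))) := by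
      have h := (hAB s t x).sub (hAB s s x)
      have heq : (fun k => ⟪E (2*k+1), x⟫ • F (2*k+1)) =
          fun k => ⟪S s (e k), x⟫ • S t (f k) - ⟪S s (e k), x⟫ • S s (f k) := by
        funext k; rw [hEo k, hFo k, smul_sub]
      rw [heq]; exact h
    have h := HasSum.even_add_odd (f := fun n => ⟪E n, x⟫ • F n) heven hodd
    have hval : (S t ∘L Qξ ∘L adjoint (S t) - S s ∘L Qξ ∘L adjoint (S s)) x =
        (S t (Qξ (adjoint (S t) x)) - S t (Qξ (adjoint (S s) x))) +
        (S t (Qξ (adjoint (S s) x)) - S s (Qξ (adjoint (S s) x))) := by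
      simp only [ContinuousLinearMap.sub_apply, ContinuousLinearMap.comp_apply]
      abel
    rw [hval]
    exact h
  have hnorm : HasSum (fun n => ‖E n‖ * ‖F n‖) (∑' k, g k s) := by
    have heven : HasSum (fun k => ‖E (2*k)‖ * ‖F (2*k)‖)
        (∑' k, ‖S t (e k) - S s (e k)‖ * ‖S t (f k)‖) := by
      have heq : (fun k => ‖E (2*k)‖ * ‖F (2*k)‖) =
          fun k => ‖S t (e k) - S s (e k)‖ * ‖S t (f k)‖ := by
        funext k; rw [hEe k, hFe k]
      rw [heq]; exact hp1.hasSum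
    have hodd : HasSum (fun k => ‖E (2*k+1)‖ * ‖F (2*k+1)‖)
        (∑' k, ‖S s (e k)‖ * ‖S t (f k) - S s (f k)‖) := by
      have heq : (fun k => ‖E (2*k+1)‖ * ‖F (2*k+1)‖) =
          fun k => ‖S s (e k)‖ * ‖S t (f k) - S s (f k)‖ := by
        funext k; rw [hEo k, hFo k]
      rw [heq]; exact hp2.hasSum
    have h := HasSum.even_add_odd (f := fun n => ‖E n‖ * ‖F n‖) heven hodd
    rwa [← Summable.tsum_add hp1 hp2] at h
  have hle := traceNorm_le_of_hasSum _ _ E F hxrep hnorm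
  have htails : Summable (fun k => g (k + N) s) := (summable_nat_add_iff N).mpr hgs
  have hMtail : Summable (fun k => M (k + N)) := (summable_nat_add_iff N).mpr hM
  calc traceNorm (S t ∘L Qξ ∘L adjoint (S t) - S s ∘L Qξ ∘L adjoint (S s))
      ≤ ∑' k, g k s := hle
    _ = ∑ k ∈ Finset.range N, g k s + ∑' k, g (k + N) s :=
        (Summable.sum_add_tsum_nat_add N hgs).symm
    _ < ε / 2 + ε / 2 := by
        apply add_lt_add_of_lt_of_le (hδ s hs (by rwa [Real.dist_eq]))
        calc ∑' k, g (k + N) s ≤ ∑' k, M (k + N) :=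
              Summable.tsum_le_tsum (fun k => hgle _) htails hMtail
          _ ≤ ε / 2 := le_of_lt hN
    _ = ε := by ring
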